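/- arXiv:1809.04305 — 3 statements merged into one kernel-verified Lean document; each statement's English description precedes it below -/
import Mathlib

section
/- Let k be an algebraically closed field of characteristic 0. The quotient of the free k-algebra on three generators t₁, t₂, t₃ by the two-sided ideal generated by the elements t₁t₂ + t₂t₁, t₁t₃ + t₃t₁, t₂t₃ − t₃t₂, t₁² − 1, t₂² − 1, t₃² − 1 is isomorphic as a k-algebra to M₂(k) × M₂(k), the product of two copies of the algebra of 2×2 matrices over k. -/
open FreeAlgebra

/-- The quotient of the free `k`-algebra on `Fin m` by the two-sided ideal
generated by the set `rels` of relators, realized as the `RingQuot` of the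
relation identifying each relator with `0`. -/
abbrev presentedAlgebra (k : Type) [Field k] (m : ℕ)
    (rels : Set (FreeAlgebra k (Fin m))) : Type :=
  RingQuot (fun a b : FreeAlgebra k (Fin m) => a ∈ rels ∧ b = 0)

namespace Stmt0Aux

noncomputable section

set_option linter.unusedSectionVars false
variable (k : Type) [Field k] [CharZero k]

abbrev M2 := Matrix (Fin 2) (Fin 2) k

/-- Pauli-type matrices. -/
def σx : M2 k := !![0, 1; 1, 0]
def σz : M2 k := !![1, 0; 0, -1]

lemma σx_sq : σx k * σx k = 1 := by
  simp [σx, Matrix.mul_fin_two, Matrix.one_fin_two]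

lemma σz_sq : σz k * σz k = 1 := by
  simp [σz, Matrix.mul_fin_two, Matrix.one_fin_two]

lemma σxz : σx k * σz k = !![0, -1; 1, 0] := by
  simp [σx, σz, Matrix.mul_fin_two]

lemma σzx : σz k * σx k = !![0, 1; -1, 0] := by
  simp [σx, σz, Matrix.mul_fin_two]

lemma anticomm : σx k * σz k + σz k * σx k = 0 := by
  rw [σxz, σzx]
  ext i j
  fin_cases i <;> fin_cases j <;> simp

lemma anticomm' : σz k * σx k = -(σx k * σz k) :=
  eq_neg_of_add_eq_zero_left (by rw [add_comm]; exact anticomm k)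

def rels : Set (FreeAlgebra k (Fin 3)) :=
  {ι k 0 * ι k 1 + ι k 1 * ι k 0,
   ι k 0 * ι k 2 + ι k 2 * ι k 0,
   ι k 1 * ι k 2 - ι k 2 * ι k 1,
   ι k 0 * ι k 0 - 1,
   ι k 1 * ι k 1 - 1,
   ι k 2 * ι k 2 - 1}

abbrev A := presentedAlgebra k 3 (rels k)

def gens : Fin 3 → M2 k × M2 k :=
  ![(σx k, σx k), (σz k, σz k), (σz k, -σz k)]

def F : FreeAlgebra k (Fin 3) →ₐ[k] M2 k × M2 k := FreeAlgebra.lift k (gens k)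

lemma F_rel : ∀ ⦃x y : FreeAlgebra k (Fin 3)⦄, (x ∈ rels k ∧ y = 0) → F k x = F k y := by
  rintro x y ⟨hx, rfl⟩
  simp only [rels, Set.mem_insert_iff, Set.mem_singleton_iff] at hx
  rcases hx with rfl | rfl | rfl | rfl | rfl | rfl <;>
    simp only [map_add, map_sub, map_mul, map_one, map_zero, F, FreeAlgebra.lift_ι_apply,
      gens, Matrix.cons_val_zero, Matrix.cons_val_one, Matrix.head_cons, Prod.mk_mul_mk,
      Prod.mk_add_mk, Prod.mk_sub_mk, Matrix.cons_val_two, Matrix.tail_cons] <;>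
    simp [Prod.ext_iff, anticomm, anticomm', σx_sq, σz_sq]

/-- The relation underlying the presented algebra. -/
abbrev rl : FreeAlgebra k (Fin 3) → FreeAlgebra k (Fin 3) → Prop :=
  fun a b => a ∈ rels k ∧ b = 0

def π : FreeAlgebra k (Fin 3) →ₐ[k] A k := RingQuot.mkAlgHom k (rl k)

def φ : A k →ₐ[k] M2 k × M2 k := RingQuot.liftAlgHom k ⟨F k, F_rel k⟩

lemma φ_π (x : FreeAlgebra k (Fin 3)) : φ k (π k x) = F k x :=
  RingQuot.liftAlgHom_mkAlgHom_apply k (F k) (F_rel k) x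

def a : A k := π k (ι k 0)
def b : A k := π k (ι k 1)
def c : A k := π k (ι k 2)

lemma π_rel {x : FreeAlgebra k (Fin 3)} (hx : x ∈ rels k) : π k x = 0 := by
  have h := RingQuot.mkAlgHom_rel k (s := rl k) ⟨hx, rfl⟩
  simpa [π] using h

lemma rel_ab : b k * a k = -(a k * b k) := by
  have h := π_rel k (x := ι k 0 * ι k 1 + ι k 1 * ι k 0) (by simp [rels])
  simp only [map_add, map_mul] at h
  exact eq_neg_of_add_eq_zero_left (by rw [add_comm]; exact h)

lemma rel_ac : c k * a k = -(a k * c k) := by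
  have h := π_rel k (x := ι k 0 * ι k 2 + ι k 2 * ι k 0) (by simp [rels])
  simp only [map_add, map_mul] at h
  exact eq_neg_of_add_eq_zero_left (by rw [add_comm]; exact h)

lemma rel_bc : c k * b k = b k * c k := by
  have h := π_rel k (x := ι k 1 * ι k 2 - ι k 2 * ι k 1) (by simp [rels])
  simp only [map_sub, map_mul] at h
  exact (sub_eq_zero.mp h).symm

lemma rel_aa : a k * a k = 1 := by
  have h := π_rel k (x := ι k 0 * ι k 0 - 1) (by simp [rels])
  simp only [map_sub, map_mul, map_one] at h
  exact sub_eq_zero.mp h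

lemma rel_bb : b k * b k = 1 := by
  have h := π_rel k (x := ι k 1 * ι k 1 - 1) (by simp [rels])
  simp only [map_sub, map_mul, map_one] at h
  exact sub_eq_zero.mp h

lemma rel_cc : c k * c k = 1 := by
  have h := π_rel k (x := ι k 2 * ι k 2 - 1) (by simp [rels])
  simp only [map_sub, map_mul, map_one] at h
  exact sub_eq_zero.mp h

lemma Aneg_mul (x y : A k) : -x * y = -(x * y) := neg_mul x y
lemma Amul_neg (x y : A k) : x * -y = -(x * y) := mul_neg x y

-- nested versions for simp normalization
lemma rel_ab' (x : A k) : b k * (a k * x) = -(a k * (b k * x)) := by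
  rw [← mul_assoc, rel_ab, Aneg_mul, mul_assoc]
lemma rel_ac' (x : A k) : c k * (a k * x) = -(a k * (c k * x)) := by
  rw [← mul_assoc, rel_ac, Aneg_mul, mul_assoc]
lemma rel_bc' (x : A k) : c k * (b k * x) = b k * (c k * x) := by
  rw [← mul_assoc, rel_bc, mul_assoc]
lemma rel_aa' (x : A k) : a k * (a k * x) = x := by
  rw [← mul_assoc, rel_aa, one_mul]
lemma rel_bb' (x : A k) : b k * (b k * x) = x := by
  rw [← mul_assoc, rel_bb, one_mul]
lemma rel_cc' (x : A k) : c k * (c k * x) = x := by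
  rw [← mul_assoc, rel_cc, one_mul]

/-- spanning monomials -/
def v : Fin 8 → A k :=
  ![1, a k, b k, c k, a k * b k, a k * c k, b k * c k, a k * (b k * c k)]

def M : Submodule k (A k) := Submodule.span k (Set.range (v k))

lemma mem_M (i : Fin 8) : v k i ∈ M k := Submodule.subset_span ⟨i, rfl⟩

lemma v0 : v k 0 = 1 := rfl
lemma v1 : v k 1 = a k := rfl
lemma v2 : v k 2 = b k := rfl
lemma v3 : v k 3 = c k := rfl
lemma v4 : v k 4 = a k * b k := rfl
lemma v5 : v k 5 = a k * c k := rfl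
lemma v6 : v k 6 = b k * c k := rfl
lemma v7 : v k 7 = a k * (b k * c k) := rfl

lemma a_mul_mem (i : Fin 8) : a k * v k i ∈ M k := by
  fin_cases i
  · show a k * 1 ∈ M k
    rw [mul_one]; exact mem_M k 1
  · show a k * a k ∈ M k
    rw [rel_aa]; exact mem_M k 0
  · show a k * b k ∈ M k
    exact mem_M k 4
  · show a k * c k ∈ M k
    exact mem_M k 5
  · show a k * (a k * b k) ∈ M k
    rw [rel_aa']; exact mem_M k 2
  · show a k * (a k * c k) ∈ M k
    rw [rel_aa']; exact mem_M k 3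
  · show a k * (b k * c k) ∈ M k
    exact mem_M k 7
  · show a k * (a k * (b k * c k)) ∈ M k
    rw [rel_aa']; exact mem_M k 6

lemma b_mul_mem (i : Fin 8) : b k * v k i ∈ M k := by
  fin_cases i
  · show b k * 1 ∈ M k
    rw [mul_one]; exact mem_M k 2
  · show b k * a k ∈ M k
    rw [rel_ab]; exact (M k).neg_mem (mem_M k 4)
  · show b k * b k ∈ M k
    rw [rel_bb]; exact mem_M k 0
  · show b k * c k ∈ M k
    exact mem_M k 6
  · show b k * (a k * b k) ∈ M k
    rw [rel_ab', rel_bb]; rw [mul_one]; exact (M k).neg_mem (mem_M k 1)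
  · show b k * (a k * c k) ∈ M k
    rw [rel_ab']; exact (M k).neg_mem (mem_M k 7)
  · show b k * (b k * c k) ∈ M k
    rw [rel_bb']; exact mem_M k 3
  · show b k * (a k * (b k * c k)) ∈ M k
    rw [rel_ab', rel_bb']; exact (M k).neg_mem (mem_M k 5)

lemma c_mul_mem (i : Fin 8) : c k * v k i ∈ M k := by
  fin_cases i
  · show c k * 1 ∈ M k
    rw [mul_one]; exact mem_M k 3
  · show c k * a k ∈ M k
    rw [rel_ac]; exact (M k).neg_mem (mem_M k 5)
  · show c k * b k ∈ M k
    rw [rel_bc]; exact mem_M k 6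
  · show c k * c k ∈ M k
    rw [rel_cc]; exact mem_M k 0
  · show c k * (a k * b k) ∈ M k
    rw [rel_ac', rel_bc]; exact (M k).neg_mem (mem_M k 7)
  · show c k * (a k * c k) ∈ M k
    rw [rel_ac', rel_cc]; rw [mul_one]; exact (M k).neg_mem (mem_M k 1)
  · show c k * (b k * c k) ∈ M k
    rw [rel_bc', rel_cc]; rw [mul_one]; exact mem_M k 2
  · show c k * (a k * (b k * c k)) ∈ M k
    rw [rel_ac', rel_bc', rel_cc]; rw [mul_one]; exact (M k).neg_mem (mem_M k 4)

lemma adjoin_abc : Algebra.adjoin k ({a k, b k, c k} : Set (A k)) = ⊤ := by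
  rw [eq_top_iff]
  have h1 : Algebra.adjoin k ((π k) '' Set.range (ι k : Fin 3 → FreeAlgebra k (Fin 3))) = ⊤ := by
    rw [← AlgHom.map_adjoin, FreeAlgebra.adjoin_range_ι, Algebra.map_top,
      AlgHom.range_eq_top]
    exact RingQuot.mkAlgHom_surjective k (rl k)
  rw [← h1]
  apply Algebra.adjoin_mono
  rintro _ ⟨_, ⟨i, rfl⟩, rfl⟩
  fin_cases i
  · exact Set.mem_insert _ _
  · exact Set.mem_insert_of_mem _ (Set.mem_insert _ _)
  · exact Set.mem_insert_of_mem _ (Set.mem_insert_of_mem _ rfl)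

/-- The subalgebra of elements whose left multiplication preserves `M`. -/
def S : Subalgebra k (A k) where
  carrier := {x | ∀ m ∈ M k, x * m ∈ M k}
  mul_mem' := fun {x y} hx hy m hm => by
    rw [mul_assoc]; exact hx _ (hy _ hm)
  add_mem' := fun {x y} hx hy m hm => by
    rw [add_mul]; exact (M k).add_mem (hx _ hm) (hy _ hm)
  algebraMap_mem' := fun r m hm => by
    rw [← Algebra.smul_def]; exact (M k).smul_mem r hm

lemma mem_S_of_gens (x : A k) (h : ∀ i, x * v k i ∈ M k) : x ∈ S k := by
  intro m hm
  have hle : M k ≤ (M k).comap (LinearMap.mulLeft k x) := by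
    rw [M, Submodule.span_le]
    rintro _ ⟨i, rfl⟩
    exact h i
  exact hle hm

lemma M_eq_top : M k = ⊤ := by
  have hS : S k = ⊤ := by
    rw [eq_top_iff, ← adjoin_abc k]
    apply Algebra.adjoin_le
    rintro x (rfl | rfl | rfl)
    · exact mem_S_of_gens k _ (a_mul_mem k)
    · exact mem_S_of_gens k _ (b_mul_mem k)
    · exact mem_S_of_gens k _ (c_mul_mem k)
  rw [eq_top_iff]
  intro x _
  have hx : x ∈ S k := hS ▸ trivial
  simpa [mul_one] using hx 1 (mem_M k 0)

lemma φ_a : φ k (a k) = (σx k, σx k) := by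
  rw [a, φ_π]; simp [F, FreeAlgebra.lift_ι_apply, gens]

lemma φ_b : φ k (b k) = (σz k, σz k) := by
  rw [b, φ_π]; simp [F, FreeAlgebra.lift_ι_apply, gens]

lemma φ_c : φ k (c k) = (σz k, -σz k) := by
  rw [c, φ_π]; simp [F, FreeAlgebra.lift_ι_apply, gens]

lemma matrix_decomp (m : M2 k) :
    m = ((2:k)⁻¹ * (m 0 0 + m 1 1)) • 1 + ((2:k)⁻¹ * (m 0 0 - m 1 1)) • σz k
      + ((2:k)⁻¹ * (m 0 1 + m 1 0)) • σx k
      + ((2:k)⁻¹ * (m 1 0 - m 0 1)) • (σx k * σz k) := by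
  have h2 : (2:k) ≠ 0 := two_ne_zero
  rw [σxz]
  ext i j
  fin_cases i <;> fin_cases j <;>
    simp [σx, σz, Matrix.one_apply] <;> field_simp <;> ring

lemma half_pair (x : M2 k) : (2:k)⁻¹ • ((x, x) + (x, -x)) = ((x, (0 : M2 k))) := by
  have h2 : (2:k) ≠ 0 := two_ne_zero
  refine Prod.ext ?_ ?_ <;> simp
  rw [← two_smul k, smul_smul, mul_inv_cancel₀ h2, one_smul]

lemma half_pair' (x : M2 k) : (2:k)⁻¹ • ((x, x) - (x, -x)) = (((0 : M2 k), x)) := by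
  have h2 : (2:k) ≠ 0 := two_ne_zero
  refine Prod.ext ?_ ?_ <;> simp [sub_neg_eq_add]
  rw [← two_smul k, smul_smul, mul_inv_cancel₀ h2, one_smul]

lemma left_mem (m : M2 k) : ((m, (0 : M2 k)) : M2 k × M2 k) ∈ (φ k).range := by
  set R := (φ k).range
  have hX : ((σx k, σx k) : M2 k × M2 k) ∈ R := ⟨a k, φ_a k⟩
  have hZ : ((σz k, σz k) : M2 k × M2 k) ∈ R := ⟨b k, φ_b k⟩
  have hW : ((σz k, -σz k) : M2 k × M2 k) ∈ R := ⟨c k, φ_c k⟩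
  have hp : ((σz k, (0 : M2 k)) : M2 k × M2 k) ∈ R := by
    have := R.smul_mem (R.add_mem hZ hW) (2:k)⁻¹
    rwa [half_pair] at this
  have hE : (((1 : M2 k), (0 : M2 k)) : M2 k × M2 k) ∈ R := by
    have := R.mul_mem hp hp
    rwa [Prod.mk_mul_mk, σz_sq, mul_zero] at this
  have hx0 : ((σx k, (0 : M2 k)) : M2 k × M2 k) ∈ R := by
    have := R.mul_mem hE hX
    rwa [Prod.mk_mul_mk, one_mul, zero_mul] at this
  have hxz0 : ((σx k * σz k, (0 : M2 k)) : M2 k × M2 k) ∈ R := by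
    have := R.mul_mem hx0 hp
    rwa [Prod.mk_mul_mk, zero_mul] at this
  have key : ((m, (0 : M2 k)) : M2 k × M2 k)
      = ((2:k)⁻¹ * (m 0 0 + m 1 1)) • ((1 : M2 k), (0 : M2 k))
      + ((2:k)⁻¹ * (m 0 0 - m 1 1)) • ((σz k, (0 : M2 k)) : M2 k × M2 k)
      + ((2:k)⁻¹ * (m 0 1 + m 1 0)) • ((σx k, (0 : M2 k)) : M2 k × M2 k)
      + ((2:k)⁻¹ * (m 1 0 - m 0 1)) • ((σx k * σz k, (0 : M2 k)) : M2 k × M2 k) := by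
    refine Prod.ext ?_ ?_ <;> simp
    exact matrix_decomp k m
  rw [key]
  exact R.add_mem (R.add_mem (R.add_mem (R.smul_mem hE _) (R.smul_mem hp _))
    (R.smul_mem hx0 _)) (R.smul_mem hxz0 _)

lemma right_mem (m : M2 k) : (((0 : M2 k), m) : M2 k × M2 k) ∈ (φ k).range := by
  set R := (φ k).range
  have hX : ((σx k, σx k) : M2 k × M2 k) ∈ R := ⟨a k, φ_a k⟩
  have hZ : ((σz k, σz k) : M2 k × M2 k) ∈ R := ⟨b k, φ_b k⟩
  have hW : ((σz k, -σz k) : M2 k × M2 k) ∈ R := ⟨c k, φ_c k⟩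
  have hp : (((0 : M2 k), σz k) : M2 k × M2 k) ∈ R := by
    have := R.smul_mem (R.sub_mem hZ hW) (2:k)⁻¹
    rwa [half_pair'] at this
  have hE : (((0 : M2 k), (1 : M2 k)) : M2 k × M2 k) ∈ R := by
    have := R.mul_mem hp hp
    rwa [Prod.mk_mul_mk, σz_sq, mul_zero] at this
  have hx0 : (((0 : M2 k), σx k) : M2 k × M2 k) ∈ R := by
    have := R.mul_mem hE hX
    rwa [Prod.mk_mul_mk, one_mul, zero_mul] at this
  have hxz0 : (((0 : M2 k), σx k * σz k) : M2 k × M2 k) ∈ R := by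
    have := R.mul_mem hx0 hp
    rwa [Prod.mk_mul_mk, zero_mul] at this
  have key : (((0 : M2 k), m) : M2 k × M2 k)
      = ((2:k)⁻¹ * (m 0 0 + m 1 1)) • (((0 : M2 k), (1 : M2 k)) : M2 k × M2 k)
      + ((2:k)⁻¹ * (m 0 0 - m 1 1)) • (((0 : M2 k), σz k) : M2 k × M2 k)
      + ((2:k)⁻¹ * (m 0 1 + m 1 0)) • (((0 : M2 k), σx k) : M2 k × M2 k)
      + ((2:k)⁻¹ * (m 1 0 - m 0 1)) • (((0 : M2 k), σx k * σz k) : M2 k × M2 k) := by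
    refine Prod.ext ?_ ?_ <;> simp
    exact matrix_decomp k m
  rw [key]
  exact R.add_mem (R.add_mem (R.add_mem (R.smul_mem hE _) (R.smul_mem hp _))
    (R.smul_mem hx0 _)) (R.smul_mem hxz0 _)

lemma φ_surj : Function.Surjective (φ k) := by
  rintro ⟨x, y⟩
  have : ((x, y) : M2 k × M2 k) ∈ (φ k).range := by
    have h : ((x, y) : M2 k × M2 k) = (x, 0) + (0, y) := by simp
    rw [h]
    exact Subalgebra.add_mem _ (left_mem k x) (right_mem k y)
  exact this

lemma finite_A : Module.Finite k (A k) :=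
  Module.finite_def.2 (Submodule.fg_def.2 ⟨Set.range (v k), Set.finite_range _, M_eq_top k⟩)

lemma finrank_A_le : Module.finrank k (A k) ≤ 8 := by
  have := finrank_le_of_span_eq_top (M_eq_top k)
  simpa using this

lemma finrank_target : Module.finrank k (M2 k × M2 k) = 8 := by
  rw [Module.finrank_prod, Module.finrank_matrix]
  simp

lemma φ_inj : Function.Injective (φ k) := by
  haveI := finite_A k
  have h1 := LinearMap.finrank_range_add_finrank_ker (φ k).toLinearMap
  have hrange : LinearMap.range (φ k).toLinearMap = ⊤ :=
    LinearMap.range_eq_top.2 (φ_surj k)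
  rw [hrange, finrank_top, finrank_target] at h1
  have h2 : Module.finrank k (LinearMap.ker (φ k).toLinearMap) = 0 := by
    have := finrank_A_le k
    omega
  have h3 : LinearMap.ker (φ k).toLinearMap = ⊥ := Submodule.finrank_eq_zero.mp h2
  exact LinearMap.ker_eq_bot.mp h3

def theEquiv : A k ≃ₐ[k] M2 k × M2 k :=
  AlgEquiv.ofBijective (φ k) ⟨φ_inj k, φ_surj k⟩

end
end Stmt0Aux

theorem stmt_0 (k : Type) [Field k] [IsAlgClosed k] [CharZero k] :
    Nonempty (presentedAlgebra k 3
      {ι k 0 * ι k 1 + ι k 1 * ι k 0,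
       ι k 0 * ι k 2 + ι k 2 * ι k 0,
       ι k 1 * ι k 2 - ι k 2 * ι k 1,
       ι k 0 * ι k 0 - 1,
       ι k 1 * ι k 1 - 1,
       ι k 2 * ι k 2 - 1}
      ≃ₐ[k] Matrix (Fin 2) (Fin 2) k × Matrix (Fin 2) (Fin 2) k) := by
  exact ⟨Stmt0Aux.theEquiv k⟩
end

section
/- Let k be an algebraically closed field of characteristic 0. The quotient of the free k-algebra on three generators t₁, t₂, t₃ by the two-sided ideal generated by the elements t₁t₂ + t₂t₁, t₁t₃ − t₃t₁, t₂t₃ − t₃t₂, t₁² − 1, t₂² − 1, t₃² − 1 is isomorphic as a k-algebra to M₂(k) × M₂(k), the product of two copies of the algebra of 2×2 matrices over k. -/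
open FreeAlgebra

/-!
Sending `t₁, t₂` to the anticommuting Pauli matrices `σₓ, σ_z` in both factors and `t₃` to
`(1, -1)` defines a homomorphism to `M₂(k) × M₂(k)`. It is onto: `σₓ, σ_z` generate `M₂(k)`
once `2` is invertible, and `(1 + t₃)/2` maps to the idempotent `(1, 0)` separating the factors.
The relations let every word be rewritten as `± t₁^a t₂^b t₃^c`, so the algebra has dimension at
most `8 = dim (M₂(k) × M₂(k))`, and the surjection is an isomorphism.
-/

theorem LinearMap.bijective_of_surjective_of_finrank_le {K V W : Type*} [DivisionRing K]
    [AddCommGroup V] [Module K V] [AddCommGroup W] [Module K W] [Module.Finite K V]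
    {f : V →ₗ[K] W} (hf : Function.Surjective f)
    (hdim : Module.finrank K V ≤ Module.finrank K W) : Function.Bijective f := by
  have : Module.Finite K W := Module.Finite.of_surjective f hf
  have hdim' := hdim.antisymm (LinearMap.finrank_le_finrank_of_surjective hf)
  exact ⟨(injective_iff_surjective_of_finrank_eq_finrank hdim').2 hf, hf⟩

theorem AlgHom.surjective_prod_of_surjective_fst_snd {R A B C : Type*} [CommSemiring R]
    [Ring A] [Algebra R A] [Ring B] [Algebra R B] [Ring C] [Algebra R C]
    (φ : A →ₐ[R] B × C) (e : A) (he : φ e = (1, 0))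
    (hfst : Function.Surjective ((AlgHom.fst R B C).comp φ))
    (hsnd : Function.Surjective ((AlgHom.snd R B C).comp φ)) : Function.Surjective φ := by
  rintro ⟨b, c⟩
  obtain ⟨a₁, ha₁⟩ := hfst b
  obtain ⟨a₂, ha₂⟩ := hsnd c
  refine ⟨e * a₁ + (1 - e) * a₂, Prod.ext ?_ ?_⟩
  · simpa [he] using ha₁
  · simpa [he] using ha₂

namespace presentedAlgebra

variable {k : Type} [Field k] {m : ℕ} {rels : Set (FreeAlgebra k (Fin m))}

variable (rels) in
noncomputable def mk : FreeAlgebra k (Fin m) →ₐ[k] presentedAlgebra k m rels :=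
  RingQuot.mkAlgHom k _

noncomputable def gen (i : Fin m) : presentedAlgebra k m rels := mk rels (ι k i)

theorem mk_surjective : Function.Surjective (mk rels) := RingQuot.mkAlgHom_surjective k _

@[simp]
theorem mk_ι (i : Fin m) : mk rels (ι k i) = gen i := rfl

theorem mk_eq_zero_of_mem {r : FreeAlgebra k (Fin m)} (hr : r ∈ rels) : mk rels r = 0 := by
  rw [mk, RingQuot.mkAlgHom_rel k ⟨hr, rfl⟩, map_zero]

section lift

variable {B : Type*} [Semiring B] [Algebra k B] (f : Fin m → B)
  (hf : ∀ r ∈ rels, FreeAlgebra.lift k f r = 0)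

noncomputable def lift : presentedAlgebra k m rels →ₐ[k] B :=
  RingQuot.liftAlgHom k ⟨FreeAlgebra.lift k f, by rintro a b ⟨ha, rfl⟩; rw [hf a ha, map_zero]⟩

@[simp]
theorem lift_gen (i : Fin m) : lift f hf (gen i) = f i := by
  rw [lift, gen, mk, RingQuot.liftAlgHom_mkAlgHom_apply, lift_ι_apply]

end lift

theorem span_eq_top_of_gen_mul_mem (s : Set (presentedAlgebra k m rels))
    (h1 : 1 ∈ Submodule.span k s) (hs : ∀ i, ∀ b ∈ s, gen i * b ∈ Submodule.span k s) :
    Submodule.span k s = ⊤ := by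
  set W := Submodule.span k s
  suffices h : ∀ a : FreeAlgebra k (Fin m), ∀ w ∈ W, mk rels a * w ∈ W by
    refine eq_top_iff.2 fun a _ => ?_
    obtain ⟨a, rfl⟩ := mk_surjective a
    simpa using h a 1 h1
  intro a
  induction a using FreeAlgebra.induction with
  | grade0 r =>
    intro w hw
    rw [AlgHom.commutes, ← Algebra.smul_def]
    exact W.smul_mem r hw
  | grade1 i =>
    intro w hw
    induction hw using Submodule.span_induction with
    | mem b hb => exact hs i b hb
    | zero => simp
    | add u v _ _ hu hv => rw [mul_add]; exact W.add_mem hu hv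
    | smul c u _ hu => rw [mul_smul_comm]; exact W.smul_mem c hu
  | mul a b ha hb =>
    intro w hw
    rw [map_mul, mul_assoc]
    exact ha _ (hb w hw)
  | add a b ha hb =>
    intro w hw
    rw [map_add, add_mul]
    exact W.add_mem (ha w hw) (hb w hw)

end presentedAlgebra

namespace Matrix

section Ring

variable (R : Type*) [Ring R]

def pauliX : Matrix (Fin 2) (Fin 2) R := !![0, 1; 1, 0]

def pauliZ : Matrix (Fin 2) (Fin 2) R := !![1, 0; 0, -1]

@[simp]
theorem pauliX_mul_self : pauliX R * pauliX R = 1 := by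
  simp [pauliX, one_fin_two]

@[simp]
theorem pauliZ_mul_self : pauliZ R * pauliZ R = 1 := by
  simp [pauliZ, one_fin_two]

theorem pauliX_mul_pauliZ_add_pauliZ_mul_pauliX :
    pauliX R * pauliZ R + pauliZ R * pauliX R = 0 := by
  simp [pauliX, pauliZ, ← Matrix.ext_iff, Fin.forall_fin_two]

end Ring

variable {k : Type*} [Field k] [NeZero (2 : k)]

theorem eq_pauli_combination (M : Matrix (Fin 2) (Fin 2) k) :
    M = ((M 0 0 + M 1 1) / 2) • 1 + ((M 0 1 + M 1 0) / 2) • pauliX k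
      + ((M 0 0 - M 1 1) / 2) • pauliZ k + ((M 1 0 - M 0 1) / 2) • (pauliX k * pauliZ k) := by
  ext i j
  fin_cases i <;> fin_cases j <;> simp [pauliX, pauliZ] <;> field_simp <;> ring

variable (k) in
theorem adjoin_pauliX_pauliZ : Algebra.adjoin k {pauliX k, pauliZ k} = ⊤ := by
  refine eq_top_iff.2 fun M _ => ?_
  have hX : pauliX k ∈ Algebra.adjoin k {pauliX k, pauliZ k} := Algebra.subset_adjoin (by simp)
  have hZ : pauliZ k ∈ Algebra.adjoin k {pauliX k, pauliZ k} := Algebra.subset_adjoin (by simp)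
  rw [eq_pauli_combination M]
  exact add_mem (add_mem (add_mem (Subalgebra.smul_mem _ (one_mem _) _)
    (Subalgebra.smul_mem _ hX _)) (Subalgebra.smul_mem _ hZ _))
    (Subalgebra.smul_mem _ (mul_mem hX hZ) _)

theorem surjective_of_pauli_mem_range {A : Type*} [Semiring A] [Algebra k A]
    (g : A →ₐ[k] Matrix (Fin 2) (Fin 2) k)
    (hX : pauliX k ∈ g.range) (hZ : pauliZ k ∈ g.range) : Function.Surjective g := by
  rw [← AlgHom.range_eq_top, eq_top_iff, ← adjoin_pauliX_pauliZ, Algebra.adjoin_le_iff]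
  rintro _ (rfl | rfl)
  exacts [hX, hZ]

end Matrix

abbrev PauliAlgebra.relators (k : Type) [Field k] : Set (FreeAlgebra k (Fin 3)) :=
  {ι k 0 * ι k 1 + ι k 1 * ι k 0,
   ι k 0 * ι k 2 - ι k 2 * ι k 0,
   ι k 1 * ι k 2 - ι k 2 * ι k 1,
   ι k 0 * ι k 0 - 1,
   ι k 1 * ι k 1 - 1,
   ι k 2 * ι k 2 - 1}

abbrev PauliAlgebra (k : Type) [Field k] : Type :=
  presentedAlgebra k 3 (PauliAlgebra.relators k)

namespace PauliAlgebra

open presentedAlgebra Matrix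

variable {k : Type} [Field k]

local notation "x" => (gen 0 : PauliAlgebra k)
local notation "y" => (gen 1 : PauliAlgebra k)
local notation "z" => (gen 2 : PauliAlgebra k)

theorem gen_mul_self (i : Fin 3) : (gen i : PauliAlgebra k) * gen i = 1 := by
  have h := mk_eq_zero_of_mem (rels := relators k) (r := ι k i * ι k i - 1)
    (by fin_cases i <;> simp)
  rwa [map_sub, map_mul, mk_ι, map_one, sub_eq_zero] at h

theorem gen_one_mul_gen_zero : y * x = -(x * y) := by
  have h := mk_eq_zero_of_mem (rels := relators k) (r := ι k 0 * ι k 1 + ι k 1 * ι k 0)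
    (by simp)
  rwa [map_add, map_mul, map_mul, mk_ι, mk_ι, add_eq_zero_iff_eq_neg'] at h

theorem commute_gen_two (i : Fin 3) : Commute z (gen i) := by
  obtain rfl | hi := eq_or_ne i 2
  · exact Commute.refl _
  have h := mk_eq_zero_of_mem (rels := relators k) (r := ι k i * ι k 2 - ι k 2 * ι k i)
    (by fin_cases i <;> simp_all)
  rwa [map_sub, map_mul, map_mul, mk_ι, mk_ι, sub_eq_zero, eq_comm] at h

theorem gen_mul_gen_mul_self (i : Fin 3) (a : PauliAlgebra k) : gen i * (gen i * a) = a := by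
  rw [← mul_assoc, gen_mul_self, one_mul]

theorem gen_one_mul_gen_zero_mul (a : PauliAlgebra k) : y * (x * a) = -(x * (y * a)) := by
  rw [← mul_assoc, gen_one_mul_gen_zero]
  exact (neg_mul (x * y) a).trans (congrArg Neg.neg (mul_assoc _ _ _))

noncomputable def monomials : Fin 8 → PauliAlgebra k :=
  ![1, x, y, z, x * y, x * z, y * z, x * (y * z)]

theorem span_monomials : Submodule.span k (Set.range (monomials (k := k))) = ⊤ := by
  refine span_eq_top_of_gen_mul_mem _ (Submodule.subset_span ⟨0, rfl⟩) ?_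
  rintro i _ ⟨j, rfl⟩
  -- left multiplication by a generator permutes the monomials up to sign
  fin_cases i <;> fin_cases j <;>
    simp only [monomials, Fin.reduceFinMk, Matrix.cons_val, mul_one, gen_mul_self,
      gen_mul_gen_mul_self, gen_one_mul_gen_zero, gen_one_mul_gen_zero_mul,
      (commute_gen_two 0).eq, (commute_gen_two 1).eq, (commute_gen_two 0).left_comm,
      (commute_gen_two 1).left_comm, Submodule.neg_mem_iff] <;>
    exact Submodule.subset_span (by
      simp only [Matrix.range_cons, Matrix.range_empty, Set.union_empty, Set.mem_union,
        Set.mem_singleton_iff, true_or, or_true])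

variable (k)

instance : Module.Finite k (PauliAlgebra k) :=
  ⟨by rw [← span_monomials]; exact Submodule.fg_span (Set.finite_range _)⟩

theorem finrank_le_eight : Module.finrank k (PauliAlgebra k) ≤ 8 := by
  have h := finrank_range_le_card (R := k) (monomials (k := k))
  rwa [Set.finrank, span_monomials, finrank_top] at h

noncomputable def toMatrixProd :
    PauliAlgebra k →ₐ[k] Matrix (Fin 2) (Fin 2) k × Matrix (Fin 2) (Fin 2) k :=
  presentedAlgebra.lift ![(pauliX k, pauliX k), (pauliZ k, pauliZ k), (1, -1)] <| by
    intro r hr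
    simp only [relators, Set.mem_insert_iff, Set.mem_singleton_iff] at hr
    rcases hr with rfl | rfl | rfl | rfl | rfl | rfl <;>
      simp [Prod.ext_iff, pauliX_mul_pauliZ_add_pauliZ_mul_pauliX]

@[simp]
theorem toMatrixProd_gen (i : Fin 3) :
    toMatrixProd k (gen i) = ![(pauliX k, pauliX k), (pauliZ k, pauliZ k), (1, -1)] i :=
  lift_gen _ _ i

theorem toMatrixProd_surjective [NeZero (2 : k)] : Function.Surjective (toMatrixProd k) := by
  refine (toMatrixProd k).surjective_prod_of_surjective_fst_snd ((2⁻¹ : k) • (1 + z)) ?_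
    (surjective_of_pauli_mem_range ((AlgHom.fst k _ _).comp (toMatrixProd k))
      ⟨x, by simp⟩ ⟨y, by simp⟩)
    (surjective_of_pauli_mem_range ((AlgHom.snd k _ _).comp (toMatrixProd k))
      ⟨x, by simp⟩ ⟨y, by simp⟩)
  ext : 1
  · simp only [map_smul, map_add, map_one, toMatrixProd_gen, cons_val, Prod.smul_fst,
      Prod.fst_add, Prod.fst_one]
    rw [← two_smul k, smul_smul, inv_mul_cancel₀ two_ne_zero, one_smul]
  · simp

end PauliAlgebra

theorem stmt_1_general (k : Type) [Field k] [CharZero k] :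
    Nonempty (presentedAlgebra k 3
      {ι k 0 * ι k 1 + ι k 1 * ι k 0,
       ι k 0 * ι k 2 - ι k 2 * ι k 0,
       ι k 1 * ι k 2 - ι k 2 * ι k 1,
       ι k 0 * ι k 0 - 1,
       ι k 1 * ι k 1 - 1,
       ι k 2 * ι k 2 - 1}
      ≃ₐ[k] Matrix (Fin 2) (Fin 2) k × Matrix (Fin 2) (Fin 2) k) := by
  have hdim : Module.finrank k (PauliAlgebra k) ≤
      Module.finrank k (Matrix (Fin 2) (Fin 2) k × Matrix (Fin 2) (Fin 2) k) := by
    simpa [Module.finrank_prod, Module.finrank_matrix] using PauliAlgebra.finrank_le_eight k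
  exact ⟨AlgEquiv.ofBijective (PauliAlgebra.toMatrixProd k)
    (LinearMap.bijective_of_surjective_of_finrank_le
      (f := (PauliAlgebra.toMatrixProd k).toLinearMap)
      (PauliAlgebra.toMatrixProd_surjective k) hdim)⟩

theorem stmt_1 (k : Type) [Field k] [IsAlgClosed k] [CharZero k] :
    Nonempty (presentedAlgebra k 3
      {ι k 0 * ι k 1 + ι k 1 * ι k 0,
       ι k 0 * ι k 2 - ι k 2 * ι k 0,
       ι k 1 * ι k 2 - ι k 2 * ι k 1,
       ι k 0 * ι k 0 - 1,
       ι k 1 * ι k 1 - 1,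
       ι k 2 * ι k 2 - 1}
      ≃ₐ[k] Matrix (Fin 2) (Fin 2) k × Matrix (Fin 2) (Fin 2) k) :=
  stmt_1_general k
end

section
/- Let k be a field of characteristic 0, let n ≥ 1, and let α_{ij} ∈ k for 1 ≤ i, j ≤ n satisfy α_{ii} = 1 for all i and α_{ij}α_{ji} = 1 for all i, j. Let S be the quotient of the free k-algebra on x₁, …, x_n by the two-sided ideal generated by the elements x_ix_j − α_{ij}x_jx_i for all 1 ≤ i, j ≤ n (the graded skew polynomial algebra). Then the image in S of the element f = x₁² + x₂² + ⋯ + x_n² is central in S if and only if α_{ij}² = 1 for all 1 ≤ i, j ≤ n, i.e., if and only if every α_{ij} equals 1 or −1. -/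
/-!
If every `α i j = ±1`, then `x_i² x_j = α i j ² x_j x_i² = x_j x_i²`, so `f` commutes with
the generators and hence is central. Conversely, for `i ≠ j` and `q = α i j`, the quantum plane
operators `X e_{a,b} = q^b e_{a+1,b}` and `Y e_{a,b} = e_{a,b+1}` on `k[ℕ × ℕ]` satisfy
`XY = qYX`, so `x_i ↦ X`, `x_j ↦ Y`, `x_l ↦ 0` otherwise defines a representation of `S` in
which `f ↦ X² + Y²`. Centrality of `f` then gives `X²Y = YX²`, i.e. `q² YX² = YX²`, and
`YX² ≠ 0` forces `q² = 1`.
-/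

open FreeAlgebra

/-- The defining relation of the skew polynomial algebra with parameters `α`. -/
abbrev skewRels (k : Type) [Field k] (n : ℕ) (α : Fin n → Fin n → k) :
    Set (FreeAlgebra k (Fin n)) :=
  {r | ∃ i j : Fin n, r = ι k i * ι k j - α i j • (ι k j * ι k i)}

section SkewCommuting

variable {R A : Type*} [CommRing R] [Ring A] [Algebra R A] {a b : A} {c : R}

theorem mul_self_mul_eq_sq_smul (h : a * b = c • (b * a)) :
    a * a * b = c ^ 2 • (b * a * a) := by
  rw [mul_assoc, h, mul_smul_comm, ← mul_assoc, h, smul_mul_assoc, smul_smul, sq, mul_assoc]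

theorem sq_eq_one_of_commute_add_mul_self [Module.IsTorsionFree R A] [IsCancelMulZero R]
    (h : a * b = c • (b * a)) (hba : b * a * a ≠ 0) (hcomm : Commute (a * a + b * b) b) :
    c ^ 2 = 1 := by
  have hab : a * a * b = b * a * a := by
    simpa only [add_mul, mul_add, mul_assoc, add_left_inj] using hcomm.eq
  rw [mul_self_mul_eq_sq_smul h] at hab
  have : (c ^ 2 - 1) • (b * a * a) = 0 := by rw [sub_smul, one_smul, hab, sub_self]
  exact sub_eq_zero.mp ((smul_eq_zero.mp this).resolve_right hba)

end SkewCommuting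

theorem FreeAlgebra.commute_of_forall_commute_ι {R X A : Type*} [CommSemiring R] [Semiring A]
    [Algebra R A] {f : FreeAlgebra R X →ₐ[R] A} (hf : Function.Surjective f) {z : A}
    (hz : ∀ x, Commute z (f (ι R x))) (y : A) : Commute z y := by
  obtain ⟨a, rfl⟩ := hf y
  induction a using FreeAlgebra.induction with
  | grade0 r => rw [AlgHom.commutes]; exact Algebra.commute_algebraMap_right r z
  | grade1 x => exact hz x
  | mul a b ha hb => rw [map_mul]; exact ha.mul_right hb
  | add a b ha hb => rw [map_add]; exact ha.add_right hb

section QuantumPlane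

variable {k : Type*} [Field k]

noncomputable def quantumPlaneX (q : k) : Module.End k ((ℕ × ℕ) →₀ k) :=
  Finsupp.lift _ k (ℕ × ℕ) fun p => Finsupp.single (p.1 + 1, p.2) (q ^ p.2)

noncomputable def quantumPlaneY : Module.End k ((ℕ × ℕ) →₀ k) :=
  Finsupp.lift _ k (ℕ × ℕ) fun p => Finsupp.single (p.1, p.2 + 1) 1

theorem quantumPlaneX_single (q : k) (a b : ℕ) (c : k) :
    quantumPlaneX q (Finsupp.single (a, b) c) = Finsupp.single (a + 1, b) (c * q ^ b) := by
  rw [quantumPlaneX, Finsupp.lift_apply, Finsupp.sum_single_index (by simp),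
    Finsupp.smul_single']

theorem quantumPlaneY_single (a b : ℕ) (c : k) :
    quantumPlaneY (Finsupp.single (a, b) c) = Finsupp.single (a, b + 1) c := by
  rw [quantumPlaneY, Finsupp.lift_apply, Finsupp.sum_single_index (by simp),
    Finsupp.smul_single', mul_one]

theorem quantumPlaneX_mul_Y (q : k) :
    quantumPlaneX q * quantumPlaneY = q • (quantumPlaneY * quantumPlaneX q) := by
  refine Finsupp.lhom_ext fun ⟨a, b⟩ c => ?_
  rw [Module.End.mul_apply, LinearMap.smul_apply, Module.End.mul_apply, quantumPlaneY_single,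
    quantumPlaneX_single, quantumPlaneX_single, quantumPlaneY_single, Finsupp.smul_single,
    smul_eq_mul, pow_succ]
  ring_nf

theorem quantumPlaneY_mul_X_mul_X_ne_zero (q : k) :
    quantumPlaneY * quantumPlaneX q * quantumPlaneX q ≠ 0 := by
  intro h
  have := LinearMap.congr_fun h (Finsupp.single (0, 0) 1)
  simp only [Module.End.mul_apply, quantumPlaneX_single, quantumPlaneY_single,
    LinearMap.zero_apply] at this
  simp at this

end QuantumPlane

section SkewPolynomialAlgebra

variable {k : Type} [Field k] {n : ℕ} {α : Fin n → Fin n → k}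

abbrev skewMk (k : Type) [Field k] (n : ℕ) (α : Fin n → Fin n → k) :
    FreeAlgebra k (Fin n) →ₐ[k] presentedAlgebra k n (skewRels k n α) :=
  RingQuot.mkAlgHom k _

theorem skewMk_ι_mul_ι (i j : Fin n) :
    skewMk k n α (ι k i) * skewMk k n α (ι k j)
      = α i j • (skewMk k n α (ι k j) * skewMk k n α (ι k i)) := by
  have := RingQuot.mkAlgHom_rel k (s := fun a b => a ∈ skewRels k n α ∧ b = 0)
    ⟨⟨i, j, rfl⟩, rfl⟩
  rwa [map_sub, map_zero, sub_eq_zero, map_smul, map_mul, map_mul] at this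

noncomputable def skewLift {A : Type*} [Ring A] [Algebra k A] (T : Fin n → A)
    (hT : ∀ i j, T i * T j = α i j • (T j * T i)) :
    presentedAlgebra k n (skewRels k n α) →ₐ[k] A :=
  RingQuot.liftAlgHom k ⟨FreeAlgebra.lift k T, by
    rintro _ _ ⟨⟨i, j, rfl⟩, rfl⟩
    simp [hT i j]⟩

theorem skewLift_skewMk {A : Type*} [Ring A] [Algebra k A] (T : Fin n → A)
    (hT : ∀ i j, T i * T j = α i j • (T j * T i)) (a : FreeAlgebra k (Fin n)) :
    skewLift T hT (skewMk k n α a) = FreeAlgebra.lift k T a :=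
  RingQuot.liftAlgHom_mkAlgHom_apply k _ _ a

theorem commute_skewMk_sum_sq_of_sq_eq_one (hα : ∀ i j, α i j ^ 2 = 1)
    (y : presentedAlgebra k n (skewRels k n α)) :
    Commute (skewMk k n α (∑ i, ι k i * ι k i)) y := by
  refine commute_of_forall_commute_ι (RingQuot.mkAlgHom_surjective k _) (fun j => ?_) y
  rw [map_sum]
  refine Commute.sum_left _ _ _ fun i _ => ?_
  rw [Commute, SemiconjBy, map_mul, mul_self_mul_eq_sq_smul (skewMk_ι_mul_ι i j), hα,
    one_smul, mul_assoc]

theorem sq_eq_one_of_commute_skewMk_sum_sq (h1 : ∀ i, α i i = 1)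
    (h2 : ∀ i j, α i j * α j i = 1)
    (hc : ∀ y, Commute (skewMk k n α (∑ i, ι k i * ι k i)) y) (i j : Fin n) :
    α i j ^ 2 = 1 := by
  obtain rfl | hij := eq_or_ne i j
  · rw [h1, one_pow]
  let X := quantumPlaneX (α i j)
  let Y : Module.End k ((ℕ × ℕ) →₀ k) := quantumPlaneY
  let T : Fin n → Module.End k ((ℕ × ℕ) →₀ k) :=
    fun l => if l = i then X else if l = j then Y else 0
  have hTi : T i = X := if_pos rfl
  have hTj : T j = Y := by simp [T, hij.symm]
  have hT_cases : ∀ l, T l = X ∧ l = i ∨ T l = Y ∧ l = j ∨ T l = 0 := by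
    intro l; by_cases hli : l = i <;> by_cases hlj : l = j <;> simp_all [T]
  have hXY : X * Y = α i j • (Y * X) := quantumPlaneX_mul_Y _
  have hYX : Y * X = α j i • (X * Y) := by rw [hXY, smul_smul, mul_comm, h2, one_smul]
  have hT : ∀ l m, T l * T m = α l m • (T m * T l) := by
    intro l m
    rcases hT_cases l with ⟨hl, rfl⟩ | ⟨hl, rfl⟩ | hl <;>
    rcases hT_cases m with ⟨hm, rfl⟩ | ⟨hm, rfl⟩ | hm <;>
    simp only [hl, hm] <;> first | simp [h1] | exact hXY | exact hYX
  have hsum : FreeAlgebra.lift k T (∑ l, ι k l * ι k l) = X * X + Y * Y := by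
    rw [map_sum, Fintype.sum_eq_add i j hij]
    · simp [hTi, hTj]
    · rintro l ⟨hli, hlj⟩
      simp [T, hli, hlj]
  have hYXX : Y * X * X ≠ 0 := quantumPlaneY_mul_X_mul_X_ne_zero _
  have hcomm : Commute (X * X + Y * Y) Y := by
    have := (hc (skewMk k n α (ι k j))).map (skewLift T hT)
    rwa [skewLift_skewMk, skewLift_skewMk, hsum, lift_ι_apply, hTj] at this
  exact sq_eq_one_of_commute_add_mul_self (A := Module.End k ((ℕ × ℕ) →₀ k)) hXY hYXX hcomm

end SkewPolynomialAlgebra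

theorem stmt_10_general (k : Type) [Field k] (n : ℕ)
    (α : Fin n → Fin n → k) (h1 : ∀ i, α i i = 1) (h2 : ∀ i j, α i j * α j i = 1) :
    (∀ y : presentedAlgebra k n (skewRels k n α),
        RingQuot.mkAlgHom k _ (∑ i : Fin n, ι k i * ι k i) * y
          = y * RingQuot.mkAlgHom k _ (∑ i : Fin n, ι k i * ι k i))
      ↔ ∀ i j : Fin n, α i j ^ 2 = 1 :=
  ⟨fun hc => sq_eq_one_of_commute_skewMk_sum_sq h1 h2 hc,
    fun hα y => (commute_skewMk_sum_sq_of_sq_eq_one hα y).eq⟩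

theorem stmt_10 (k : Type) [Field k] [CharZero k] (n : ℕ) (hn : 1 ≤ n)
    (α : Fin n → Fin n → k) (h1 : ∀ i, α i i = 1) (h2 : ∀ i j, α i j * α j i = 1) :
    (∀ y : presentedAlgebra k n (skewRels k n α),
        RingQuot.mkAlgHom k _ (∑ i : Fin n, ι k i * ι k i) * y
          = y * RingQuot.mkAlgHom k _ (∑ i : Fin n, ι k i * ι k i))
      ↔ ∀ i j : Fin n, α i j ^ 2 = 1 :=
  stmt_10_general k n α h1 h2
end
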